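/- Let U ~ N − Binomial(N, v_2/v_1) where v_1 > v_2 > 0 (so U counts failures in N Bernoulli(v_2/v_1) trials), and let V ~ Poisson(N ln(v_1/v_2)). Then the CDF of U · strictly dominates: P(U = 0) = P(V = 0) and P(U ≤ k) > P(V ≤ k) for every integer k ≥ 1. -/

import Mathlib

/-!
Write `v₂ / v₁ = exp (-t)` with `t > 0`. For `k < N`, both CDFs, viewed as functions of `t`,
equal `1` at `t = 0` and tend to `0` as `t → ∞`. The derivative of their difference is
`N e^{-Nt} / k! * ((N t)^k - k! C(N-1, k) (e^t - 1)^k)`, and since `(e^t - 1) / t` is increasing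
(convexity of `exp`), it changes sign at most once, from `+` to `-`. Hence the difference is
positive on `(0, ∞)`. For `k ≥ N` the binomial CDF is `1` while the Poisson CDF is below `1`.
-/

open Real Filter Finset Topology Polynomial Set

open scoped Nat

section BinomialCDF

variable (R : Type*) [CommRing R]

noncomputable def binomialCDF (N k : ℕ) : R[X] :=
  ∑ i ∈ range (k + 1), bernsteinPolynomial R N i

variable {R}

theorem eval_binomialCDF (N k : ℕ) (p : R) :
    (binomialCDF R N k).eval p =
      ∑ i ∈ range (k + 1), (N.choose i : R) * p ^ i * (1 - p) ^ (N - i) := by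
  simp [binomialCDF, bernsteinPolynomial, eval_finsetSum]

theorem derivative_binomialCDF (N k : ℕ) :
    derivative (binomialCDF R N k) = -N * bernsteinPolynomial R (N - 1) k := by
  induction k with
  | zero => simp [binomialCDF, bernsteinPolynomial.derivative_zero]
  | succ k ih =>
    rw [binomialCDF, sum_range_succ, derivative_add, ← binomialCDF, ih,
      bernsteinPolynomial.derivative_succ]
    ring

theorem eval_zero_binomialCDF (N k : ℕ) : (binomialCDF R N k).eval 0 = 1 := by
  simp [binomialCDF, eval_finsetSum, bernsteinPolynomial.eval_at_0]

theorem eval_one_binomialCDF {N k : ℕ} (hk : k < N) : (binomialCDF R N k).eval 1 = 0 := by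
  simp [binomialCDF, eval_finsetSum, bernsteinPolynomial.eval_at_1]
  omega

theorem binomialCDF_eq_one {N k : ℕ} (hk : N ≤ k) : binomialCDF R N k = 1 := by
  rw [binomialCDF, ← bernsteinPolynomial.sum R N]
  refine (sum_subset (range_subset_range.2 (by omega)) fun i _ hi => ?_).symm
  exact bernsteinPolynomial.eq_zero_of_lt R (by simpa using hi)

end BinomialCDF

noncomputable def poissonCDF (k : ℕ) (x : ℝ) : ℝ :=
  ∑ i ∈ range (k + 1), x ^ i / i ! * exp (-x)

theorem hasDerivAt_poissonCDF (k : ℕ) (x : ℝ) :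
    HasDerivAt (poissonCDF k) (-(x ^ k / k ! * exp (-x))) x := by
  induction k with
  | zero =>
    unfold poissonCDF
    simpa using (hasDerivAt_neg x).exp
  | succ k ih =>
    have hterm : HasDerivAt (fun y => y ^ (k + 1) / (k + 1)! * exp (-y))
        (x ^ k / k ! * exp (-x) - x ^ (k + 1) / (k + 1)! * exp (-x)) x := by
      refine (((hasDerivAt_pow (k + 1) x).div_const ((k + 1)! : ℝ)).fun_mul
        (hasDerivAt_neg x).exp).congr_deriv ?_
      rw [Nat.factorial_succ, Nat.add_sub_cancel]
      push_cast
      field_simp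
      ring
    unfold poissonCDF at ih ⊢
    simp only [sum_range_succ _ (k + 1)]
    exact (ih.fun_add hterm).congr_deriv (by ring)

theorem poissonCDF_zero (k : ℕ) : poissonCDF k 0 = 1 := by
  simp [poissonCDF, sum_range_succ']

theorem poissonCDF_lt_one (k : ℕ) {x : ℝ} (hx : 0 < x) : poissonCDF k x < 1 := by
  have hanti : StrictAntiOn (poissonCDF k) (Ici 0) := by
    refine strictAntiOn_of_deriv_neg (convex_Ici 0)
      (fun y _ => (hasDerivAt_poissonCDF k y).continuousAt.continuousWithinAt) fun y hy => ?_
    rw [interior_Ici, Set.mem_Ioi] at hy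
    rw [(hasDerivAt_poissonCDF k y).deriv]
    exact neg_neg_of_pos (by positivity)
  simpa [poissonCDF_zero] using hanti self_mem_Ici hx.le hx

theorem tendsto_poissonCDF_atTop (k : ℕ) : Tendsto (poissonCDF k) atTop (𝓝 0) := by
  unfold poissonCDF
  simpa [div_mul_eq_mul_div] using tendsto_finsetSum (range (k + 1))
    fun i _ => (tendsto_pow_mul_exp_neg_atTop_nhds_zero i).div_const (i ! : ℝ)

theorem pos_of_deriv_pos_then_neg {f : ℝ → ℝ} {a t : ℝ} (hf : ContinuousOn f (Ici a))
    (hfa : f a = 0) (hlim : Tendsto f atTop (𝓝 0))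
    (hderiv : ∀ u v, a < u → u < v → deriv f u ≤ 0 → deriv f v < 0) (ht : a < t) :
    0 < f t := by
  by_cases hinc : ∀ u ∈ Ioo a t, 0 < deriv f u
  · have hmono : StrictMonoOn f (Icc a t) :=
      strictMonoOn_of_deriv_pos (convex_Icc a t) (hf.mono Icc_subset_Ici_self)
        (by rwa [interior_Icc])
    simpa [hfa] using hmono (left_mem_Icc.2 ht.le) (right_mem_Icc.2 ht.le) ht
  push Not at hinc
  obtain ⟨u, ⟨hau, hut⟩, hu⟩ := hinc
  have hanti : StrictAntiOn f (Ici t) :=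
    strictAntiOn_of_deriv_neg (convex_Ici t) (hf.mono (Ici_subset_Ici.2 ht.le))
      fun v hv => hderiv u v hau (hut.trans (by simpa using hv)) hu
  have hnext : 0 ≤ f (t + 1) :=
    le_of_tendsto hlim (eventually_atTop.2 ⟨t + 1, fun v hv =>
      hanti.antitoneOn (by simp) (by simp; linarith) hv⟩)
  linarith [hanti self_mem_Ici (show t + 1 ∈ Ici t by simp) (by linarith)]

theorem strictMonoOn_exp_sub_one_div : StrictMonoOn (fun u => (exp u - 1) / u) (Ioi 0) :=
  fun u hu v hv huv => by
    simpa using strictConvexOn_exp.secant_strict_mono (mem_univ 0) (mem_univ u) (mem_univ v)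
      (ne_of_gt hu) (ne_of_gt hv) huv

theorem mul_pow_lt_mul_exp_sub_one_pow {a c u v : ℝ} {k : ℕ} (hc : 0 < c) (hk : k ≠ 0)
    (hu : 0 < u) (huv : u < v) (h : (a * u) ^ k ≤ c * (exp u - 1) ^ k) :
    (a * v) ^ k < c * (exp v - 1) ^ k := by
  have hv : 0 < v := hu.trans huv
  have hslope : v / u * (exp u - 1) < exp v - 1 := by
    have := strictMonoOn_exp_sub_one_div hu hv huv
    rw [div_lt_div_iff₀ hu hv] at this
    rw [div_mul_eq_mul_div, div_lt_iff₀ hu]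
    linarith
  have hexp : 0 ≤ v / u * (exp u - 1) := by
    have : 0 < exp u - 1 := by linarith [add_one_lt_exp hu.ne']
    positivity
  calc (a * v) ^ k = (v / u) ^ k * (a * u) ^ k := by
        rw [← mul_pow]; congr 1; field_simp
    _ ≤ (v / u) ^ k * (c * (exp u - 1) ^ k) := by gcongr
    _ = c * (v / u * (exp u - 1)) ^ k := by rw [mul_pow]; ring
    _ < c * (exp v - 1) ^ k := by gcongr

theorem eval_binomialCDF_zero_one_sub_exp (N : ℕ) (t : ℝ) :
    (binomialCDF ℝ N 0).eval (1 - exp (-t)) = poissonCDF 0 (N * t) := by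
  simp [eval_binomialCDF, poissonCDF, ← exp_nat_mul]

theorem hasDerivAt_binomialCDF_sub_poissonCDF {N k : ℕ} (hk : k < N) (u : ℝ) :
    HasDerivAt (fun t => (binomialCDF ℝ N k).eval (1 - exp (-t)) - poissonCDF k (N * t))
      (N * exp (-(N * u)) / k ! * ((N * u) ^ k - k ! * (N - 1).choose k * (exp u - 1) ^ k)) u := by
  have hbin := ((binomialCDF ℝ N k).hasDerivAt (1 - exp (-u))).comp u
    ((hasDerivAt_neg u).exp.const_sub 1)
  have hpoi := (hasDerivAt_poissonCDF k (N * u)).comp u ((hasDerivAt_id u).const_mul (N : ℝ))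
  refine (hbin.sub hpoi).congr_deriv ?_
  obtain ⟨m, rfl⟩ : ∃ m, N = k + m + 1 := ⟨N - k - 1, by omega⟩
  simp only [derivative_binomialCDF, bernsteinPolynomial, eval_mul, eval_neg, eval_natCast,
    eval_pow, eval_X, eval_sub, eval_one, sub_sub_cancel, Nat.add_sub_cancel,
    Nat.add_sub_cancel_left, mul_one]
  have hexp : exp (-((k + m + 1 : ℕ) * u)) = exp (-u) ^ k * exp (-u) ^ m * exp (-u) := by
    rw [← exp_nat_mul, ← exp_nat_mul, ← exp_add, ← exp_add]; push_cast; ring_nf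
  have hsub : 1 - exp (-u) = exp (-u) * (exp u - 1) := by
    rw [mul_sub, ← exp_add]; simp
  rw [hexp, hsub, mul_pow]
  field_simp
  ring

theorem poissonCDF_lt_eval_binomialCDF {N k : ℕ} (hN : 0 < N) (hk : k ≠ 0) {t : ℝ}
    (ht : 0 < t) :
    poissonCDF k (N * t) < (binomialCDF ℝ N k).eval (1 - exp (-t)) := by
  rcases le_or_gt N k with hNk | hkN
  · rw [binomialCDF_eq_one hNk, eval_one]
    exact poissonCDF_lt_one k (by positivity)
  set f := fun t => (binomialCDF ℝ N k).eval (1 - exp (-t)) - poissonCDF k (N * t)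
  have hderiv := hasDerivAt_binomialCDF_sub_poissonCDF hkN
  have hprefactor (u : ℝ) : 0 < N * exp (-(N * u)) / k ! := by positivity
  have hcoeff : (0 : ℝ) < k ! * (N - 1).choose k := by
    have := Nat.choose_pos (show k ≤ N - 1 by omega)
    positivity
  have hf0 : f 0 = 0 := by
    simp [f, eval_zero_binomialCDF, poissonCDF_zero]
  have hlim : Tendsto f atTop (𝓝 0) := by
    have hbin : Tendsto (fun t => (binomialCDF ℝ N k).eval (1 - exp (-t))) atTop (𝓝 0) := by
      rw [← eval_one_binomialCDF (R := ℝ) hkN]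
      exact ((binomialCDF ℝ N k).continuous.tendsto 1).comp
        (by simpa using tendsto_exp_neg_atTop_nhds_zero.const_sub 1)
    have hpoi := (tendsto_poissonCDF_atTop k).comp
      (tendsto_id.const_mul_atTop (show (0 : ℝ) < N by positivity))
    simpa using hbin.sub hpoi
  have hsign (u v : ℝ) (hu : 0 < u) (huv : u < v) (hfu : deriv f u ≤ 0) : deriv f v < 0 := by
    rw [(hderiv u).deriv] at hfu
    rw [(hderiv v).deriv]
    refine mul_neg_of_pos_of_neg (hprefactor v) (sub_neg.2 ?_)
    exact mul_pow_lt_mul_exp_sub_one_pow hcoeff hk hu huv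
      (sub_nonpos.1 (nonpos_of_mul_nonpos_right hfu (hprefactor u)))
  simpa [f, sub_pos] using pos_of_deriv_pos_then_neg
    (fun u _ => (hderiv u).continuousAt.continuousWithinAt) hf0 hlim hsign ht

/-- CDF dominance of `U = N − Binomial(N, v₂/v₁)` (i.e. `U ~ Binomial(N, 1 − v₂/v₁)`)
over a Poisson variable `V` with mean `N·ln(v₁/v₂)`: the CDFs agree at `0` and the
CDF of `U` is strictly larger at every `k ≥ 1`. -/
theorem binomial_failures_cdf_dominates_poisson (N : ℕ) (hN : 1 ≤ N)
    (v₁ v₂ : ℝ) (hv₂ : 0 < v₂) (hv : v₂ < v₁) :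
    (∑ i ∈ Finset.range (0 + 1),
        (N.choose i : ℝ) * (1 - v₂ / v₁) ^ i * (v₂ / v₁) ^ (N - i)) =
      (∑ i ∈ Finset.range (0 + 1),
        ((N : ℝ) * Real.log (v₁ / v₂)) ^ i / (Nat.factorial i) *
          Real.exp (-((N : ℝ) * Real.log (v₁ / v₂)))) ∧
    ∀ k : ℕ, 1 ≤ k →
      (∑ i ∈ Finset.range (k + 1),
        ((N : ℝ) * Real.log (v₁ / v₂)) ^ i / (Nat.factorial i) *
          Real.exp (-((N : ℝ) * Real.log (v₁ / v₂)))) <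
      (∑ i ∈ Finset.range (k + 1),
        (N.choose i : ℝ) * (1 - v₂ / v₁) ^ i * (v₂ / v₁) ^ (N - i)) := by
  set t := log (v₁ / v₂)
  have ht : 0 < t := log_pos ((one_lt_div hv₂).2 hv)
  have hratio : v₂ / v₁ = exp (-t) := by
    rw [← log_inv, inv_div, exp_log (div_pos hv₂ (hv₂.trans hv))]
  have hbin (k : ℕ) :
      ∑ i ∈ range (k + 1), (N.choose i : ℝ) * (1 - v₂ / v₁) ^ i * (v₂ / v₁) ^ (N - i)
        = (binomialCDF ℝ N k).eval (1 - exp (-t)) := by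
    rw [eval_binomialCDF, sub_sub_cancel, hratio]
  refine ⟨?_, fun k hk => ?_⟩
  · rw [hbin]
    exact eval_binomialCDF_zero_one_sub_exp N t
  · rw [hbin]
    exact poissonCDF_lt_eval_binomialCDF hN (by omega) ht
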